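/- Let R be a commutative Noetherian ring and C a semidualizing R-module, and let M^C_sci denote the class of strongly C-copure injective R-modules. Then the pair (⊥(M^C_sci), M^C_sci) is a hereditary cotorsion theory; that is, M^C_sci coincides with the class of R-modules N satisfying Ext^1_R(A,N) = 0 for all A ∈ ⊥(M^C_sci), and moreover Ext^i_R(A,B) = 0 for all i ≥ 1, all A ∈ ⊥(M^C_sci) and all B ∈ M^C_sci. -/

import Mathlib

/-!
Common definitions: semidualizing modules, the classes `P_C`, `F_C`, `I_C`,
relative (co)resolution dimensions, (strongly) (C-)copure / cotorsion / torsionfree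
modules, and `G_C`-projective/injective/flat modules.
-/

open CategoryTheory Opposite

noncomputable section

universe u

namespace Paper

/-- The `n`-th Ext group of the `R`-modules `A` and `B`, as an object of `ModuleCat R`. -/
abbrev extGrp (R : Type u) [CommRing R] (n : ℕ) (A : Type u) [AddCommGroup A] [Module R A]
    (B : Type u) [AddCommGroup B] [Module R B] : ModuleCat.{u} R :=
  ((Ext R (ModuleCat.{u} R) n).obj (op (ModuleCat.of R A))).obj (ModuleCat.of R B)

/-- The `n`-th Tor group of the `R`-modules `A` and `B`. -/
abbrev torGrp (R : Type u) [CommRing R] (n : ℕ) (A : Type u) [AddCommGroup A] [Module R A]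
    (B : Type u) [AddCommGroup B] [Module R B] : ModuleCat.{u} R :=
  ((Tor (ModuleCat.{u} R) n).obj (ModuleCat.of R A)).obj (ModuleCat.of R B)

/-- `Ext^n_R(A, B) = 0`. -/
def extVanishes (R : Type u) [CommRing R] (n : ℕ) (A : Type u) [AddCommGroup A] [Module R A]
    (B : Type u) [AddCommGroup B] [Module R B] : Prop :=
  Subsingleton (extGrp R n A B)

/-- `Tor_n^R(A, B) = 0`. -/
def torVanishes (R : Type u) [CommRing R] (n : ℕ) (A : Type u) [AddCommGroup A] [Module R A]
    (B : Type u) [AddCommGroup B] [Module R B] : Prop :=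
  Subsingleton (torGrp R n A B)

/-- `C` is a semidualizing `R`-module: it is finitely generated, the homothety map
`R → Hom_R(C, C)` is bijective, and `Ext^i_R(C, C) = 0` for all `i > 0`. -/
structure IsSemidualizing (R : Type u) [CommRing R]
    (C : Type u) [AddCommGroup C] [Module R C] : Prop where
  finite : Module.Finite R C
  bijective_homothety : Function.Bijective (LinearMap.lsmul R C)
  ext_self_vanishes : ∀ i : ℕ, 0 < i → extVanishes R i C C

/-- The class of injective `R`-modules. -/
def IsInjectiveModule (R : Type u) [CommRing R]
    (M : Type u) [AddCommGroup M] [Module R M] : Prop :=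
  Module.Injective R M

/-- The class of flat `R`-modules. -/
def IsFlatModule (R : Type u) [CommRing R]
    (M : Type u) [AddCommGroup M] [Module R M] : Prop :=
  Module.Flat R M

/-- The class of projective `R`-modules. -/
def IsProjectiveModule (R : Type u) [CommRing R]
    (M : Type u) [AddCommGroup M] [Module R M] : Prop :=
  Module.Projective R M

/-- A witness that `M ≅ Hom_R(C, I)` for some injective module `I`. -/
structure ICWitness (R : Type u) [CommRing R] (C : Type u) [AddCommGroup C] [Module R C]
    (M : Type u) [AddCommGroup M] [Module R M] where
  I : Type u
  [ab : AddCommGroup I]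
  [mod : Module R I]
  injective : Module.Injective R I
  iso : M ≃ₗ[R] (C →ₗ[R] I)

/-- `M ∈ I_C(R)`, i.e. `M ≅ Hom_R(C, I)` with `I` injective (`M` is `C`-injective). -/
def MemIC (R : Type u) [CommRing R] (C : Type u) [AddCommGroup C] [Module R C]
    (M : Type u) [AddCommGroup M] [Module R M] : Prop :=
  Nonempty (ICWitness R C M)

/-- A witness that `M ≅ C ⊗_R F` for some flat module `F`. -/
structure FCWitness (R : Type u) [CommRing R] (C : Type u) [AddCommGroup C] [Module R C]
    (M : Type u) [AddCommGroup M] [Module R M] where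
  F : Type u
  [ab : AddCommGroup F]
  [mod : Module R F]
  flat : Module.Flat R F
  iso : M ≃ₗ[R] TensorProduct R C F

/-- `M ∈ F_C(R)`, i.e. `M ≅ C ⊗_R F` with `F` flat (`M` is `C`-flat). -/
def MemFC (R : Type u) [CommRing R] (C : Type u) [AddCommGroup C] [Module R C]
    (M : Type u) [AddCommGroup M] [Module R M] : Prop :=
  Nonempty (FCWitness R C M)

/-- A witness that `M ≅ C ⊗_R P` for some projective module `P`. -/
structure PCWitness (R : Type u) [CommRing R] (C : Type u) [AddCommGroup C] [Module R C]
    (M : Type u) [AddCommGroup M] [Module R M] where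
  P : Type u
  [ab : AddCommGroup P]
  [mod : Module R P]
  projective : Module.Projective R P
  iso : M ≃ₗ[R] TensorProduct R C P

/-- `M ∈ P_C(R)`, i.e. `M ≅ C ⊗_R P` with `P` projective (`M` is `C`-projective). -/
def MemPC (R : Type u) [CommRing R] (C : Type u) [AddCommGroup C] [Module R C]
    (M : Type u) [AddCommGroup M] [Module R M] : Prop :=
  Nonempty (PCWitness R C M)

/-- An `ℕ`-indexed chain complex of `R`-modules `⋯ → X 2 → X 1 → X 0`. -/
structure NChain (R : Type u) [CommRing R] where
  X : ℕ → Type u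
  [ab : ∀ i, AddCommGroup (X i)]
  [mod : ∀ i, Module R (X i)]
  d : ∀ i : ℕ, X (i + 1) →ₗ[R] X i

attribute [instance] NChain.ab NChain.mod

/-- `c` together with the augmentation `ε : c.X 0 → M` is an exact resolution
`⋯ → X 1 → X 0 → M → 0` of `M`. -/
def NChain.IsResolutionOf {R : Type u} [CommRing R] (c : NChain R)
    {M : Type u} [AddCommGroup M] [Module R M] (ε : c.X 0 →ₗ[R] M) : Prop :=
  Function.Surjective ε ∧ LinearMap.ker ε = LinearMap.range (c.d 0) ∧
    ∀ i : ℕ, LinearMap.ker (c.d i) = LinearMap.range (c.d (i + 1))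

/-- An `ℕ`-indexed cochain complex of `R`-modules `X 0 → X 1 → X 2 → ⋯`. -/
structure NCochain (R : Type u) [CommRing R] where
  X : ℕ → Type u
  [ab : ∀ i, AddCommGroup (X i)]
  [mod : ∀ i, Module R (X i)]
  d : ∀ i : ℕ, X i →ₗ[R] X (i + 1)

attribute [instance] NCochain.ab NCochain.mod

/-- `c` together with `ι : M → c.X 0` is an exact coresolution `0 → M → X 0 → X 1 → ⋯` of `M`. -/
def NCochain.IsCoresolutionOf {R : Type u} [CommRing R] (c : NCochain R)
    {M : Type u} [AddCommGroup M] [Module R M] (ι : M →ₗ[R] c.X 0) : Prop :=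
  Function.Injective ι ∧ LinearMap.ker (c.d 0) = LinearMap.range ι ∧
    ∀ i : ℕ, LinearMap.ker (c.d (i + 1)) = LinearMap.range (c.d i)

/-- `M` has a resolution `0 → X n → ⋯ → X 1 → X 0 → M → 0` by modules in the class `P`;
i.e. the `P`-resolution dimension of `M` is at most `n`. -/
def ResDimLE (R : Type u) [CommRing R]
    (P : ∀ (N : Type u) [AddCommGroup N] [Module R N], Prop)
    (M : Type u) [AddCommGroup M] [Module R M] (n : ℕ) : Prop :=
  ∃ (c : NChain R) (ε : c.X 0 →ₗ[R] M), c.IsResolutionOf ε ∧ (∀ i, P (c.X i)) ∧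
    ∀ i, n < i → Subsingleton (c.X i)

/-- `M` has a finite resolution by modules in the class `P`. -/
def FinResDim (R : Type u) [CommRing R]
    (P : ∀ (N : Type u) [AddCommGroup N] [Module R N], Prop)
    (M : Type u) [AddCommGroup M] [Module R M] : Prop :=
  ∃ n : ℕ, ResDimLE R P M n

/-- The resolution dimension of `M` with respect to the class `P`, as an element of `ℕ∞`. -/
def resDim (R : Type u) [CommRing R]
    (P : ∀ (N : Type u) [AddCommGroup N] [Module R N], Prop)
    (M : Type u) [AddCommGroup M] [Module R M] : ℕ∞ :=
  sInf {n : ℕ∞ | ∃ m : ℕ, n = (m : ℕ∞) ∧ ResDimLE R P M m}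

/-- `M` has a coresolution `0 → M → X 0 → X 1 → ⋯ → X n → 0` by modules in the class `P`;
i.e. the `P`-coresolution dimension of `M` is at most `n`. -/
def CoresDimLE (R : Type u) [CommRing R]
    (P : ∀ (N : Type u) [AddCommGroup N] [Module R N], Prop)
    (M : Type u) [AddCommGroup M] [Module R M] (n : ℕ) : Prop :=
  ∃ (c : NCochain R) (ι : M →ₗ[R] c.X 0), c.IsCoresolutionOf ι ∧ (∀ i, P (c.X i)) ∧
    ∀ i, n < i → Subsingleton (c.X i)

/-- `M` has a finite coresolution by modules in the class `P`. -/
def FinCoresDim (R : Type u) [CommRing R]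
    (P : ∀ (N : Type u) [AddCommGroup N] [Module R N], Prop)
    (M : Type u) [AddCommGroup M] [Module R M] : Prop :=
  ∃ n : ℕ, CoresDimLE R P M n

/-- The coresolution dimension of `M` with respect to the class `P`, as an element of `ℕ∞`. -/
def coresDim (R : Type u) [CommRing R]
    (P : ∀ (N : Type u) [AddCommGroup N] [Module R N], Prop)
    (M : Type u) [AddCommGroup M] [Module R M] : ℕ∞ :=
  sInf {n : ℕ∞ | ∃ m : ℕ, n = (m : ℕ∞) ∧ CoresDimLE R P M m}

/-- `C` is a dualizing `R`-module: semidualizing of finite injective dimension. -/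
def IsDualizing (R : Type u) [CommRing R] (C : Type u) [AddCommGroup C] [Module R C] : Prop :=
  IsSemidualizing R C ∧ FinCoresDim R (IsInjectiveModule R) C

/-- `M` is strongly cotorsion: `Ext^i_R(F, M) = 0` for all `i ≥ 1` and all modules `F`
of finite flat dimension. -/
def StronglyCotorsion (R : Type u) [CommRing R]
    (M : Type u) [AddCommGroup M] [Module R M] : Prop :=
  ∀ (F : Type u) [AddCommGroup F] [Module R F], FinResDim R (IsFlatModule R) F →
    ∀ i : ℕ, 0 < i → extVanishes R i F M

/-- `M` is strongly torsionfree: `Tor_i^R(F, M) = 0` for all `i ≥ 1` and all modules `F`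
of finite flat dimension. -/
def StronglyTorsionfree (R : Type u) [CommRing R]
    (M : Type u) [AddCommGroup M] [Module R M] : Prop :=
  ∀ (F : Type u) [AddCommGroup F] [Module R F], FinResDim R (IsFlatModule R) F →
    ∀ i : ℕ, 0 < i → torVanishes R i F M

/-- `M` is cotorsion: `Ext^1_R(F, M) = 0` for all flat `F`. -/
def Cotorsion (R : Type u) [CommRing R]
    (M : Type u) [AddCommGroup M] [Module R M] : Prop :=
  ∀ (F : Type u) [AddCommGroup F] [Module R F], Module.Flat R F → extVanishes R 1 F M

/-- `M` is strongly copure injective: `Ext^i_R(E, M) = 0` for all `i ≥ 1` and all modules `E`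
of finite injective dimension. -/
def StronglyCopureInjective (R : Type u) [CommRing R]
    (M : Type u) [AddCommGroup M] [Module R M] : Prop :=
  ∀ (E : Type u) [AddCommGroup E] [Module R E], FinCoresDim R (IsInjectiveModule R) E →
    ∀ i : ℕ, 0 < i → extVanishes R i E M

/-- `M` is strongly copure flat: `Tor_i^R(E, M) = 0` for all `i ≥ 1` and all modules `E`
of finite injective dimension. -/
def StronglyCopureFlat (R : Type u) [CommRing R]
    (M : Type u) [AddCommGroup M] [Module R M] : Prop :=
  ∀ (E : Type u) [AddCommGroup E] [Module R E], FinCoresDim R (IsInjectiveModule R) E →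
    ∀ i : ℕ, 0 < i → torVanishes R i E M

/-- `M` is strongly copure projective: `Ext^i_R(M, F) = 0` for all `i ≥ 1` and all flat `F`. -/
def StronglyCopureProjective (R : Type u) [CommRing R]
    (M : Type u) [AddCommGroup M] [Module R M] : Prop :=
  ∀ (F : Type u) [AddCommGroup F] [Module R F], Module.Flat R F →
    ∀ i : ℕ, 0 < i → extVanishes R i M F

/-- `M` is strongly `C`-copure injective: `Ext^i_R(X, M) = 0` for all `i ≥ 1` and all
`X ∈ I_C(R)`. -/
def StronglyCCopureInjective (R : Type u) [CommRing R] (C : Type u) [AddCommGroup C] [Module R C]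
    (M : Type u) [AddCommGroup M] [Module R M] : Prop :=
  ∀ (X : Type u) [AddCommGroup X] [Module R X], MemIC R C X →
    ∀ i : ℕ, 0 < i → extVanishes R i X M

/-- `M` is strongly `C`-copure flat: `Tor_i^R(X, M) = 0` for all `i ≥ 1` and all `X ∈ I_C(R)`. -/
def StronglyCCopureFlat (R : Type u) [CommRing R] (C : Type u) [AddCommGroup C] [Module R C]
    (M : Type u) [AddCommGroup M] [Module R M] : Prop :=
  ∀ (X : Type u) [AddCommGroup X] [Module R X], MemIC R C X →
    ∀ i : ℕ, 0 < i → torVanishes R i X M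

/-- `M` is strongly `C`-copure projective: `Ext^i_R(M, Y) = 0` for all `i ≥ 1` and all
`Y ∈ F_C(R)`. -/
def StronglyCCopureProjective (R : Type u) [CommRing R] (C : Type u) [AddCommGroup C] [Module R C]
    (M : Type u) [AddCommGroup M] [Module R M] : Prop :=
  ∀ (Y : Type u) [AddCommGroup Y] [Module R Y], MemFC R C Y →
    ∀ i : ℕ, 0 < i → extVanishes R i M Y

/-- `M` is `C`-copure injective: `Ext^1_R(X, M) = 0` for all `X ∈ I_C(R)`. -/
def CCopureInjective (R : Type u) [CommRing R] (C : Type u) [AddCommGroup C] [Module R C]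
    (M : Type u) [AddCommGroup M] [Module R M] : Prop :=
  ∀ (X : Type u) [AddCommGroup X] [Module R X], MemIC R C X → extVanishes R 1 X M

/-- `M` is `C`-cotorsion: `Ext^1_R(Y, M) = 0` for all `Y ∈ F_C(R)`. -/
def CCotorsion (R : Type u) [CommRing R] (C : Type u) [AddCommGroup C] [Module R C]
    (M : Type u) [AddCommGroup M] [Module R M] : Prop :=
  ∀ (Y : Type u) [AddCommGroup Y] [Module R Y], MemFC R C Y → extVanishes R 1 Y M

/-- `M` is strongly `C`-cotorsion: `Ext^i_R(Y, M) = 0` for all `i ≥ 1` and all `Y ∈ F_C(R)`. -/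
def StronglyCCotorsion (R : Type u) [CommRing R] (C : Type u) [AddCommGroup C] [Module R C]
    (M : Type u) [AddCommGroup M] [Module R M] : Prop :=
  ∀ (Y : Type u) [AddCommGroup Y] [Module R Y], MemFC R C Y →
    ∀ i : ℕ, 0 < i → extVanishes R i Y M

/-- `M` is strongly `C`-torsionfree: `Tor_i^R(Y, M) = 0` for all `i ≥ 1` and all `Y ∈ F_C(R)`. -/
def StronglyCTorsionfree (R : Type u) [CommRing R] (C : Type u) [AddCommGroup C] [Module R C]
    (M : Type u) [AddCommGroup M] [Module R M] : Prop :=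
  ∀ (Y : Type u) [AddCommGroup Y] [Module R Y], MemFC R C Y →
    ∀ i : ℕ, 0 < i → torVanishes R i Y M

/-- A `ℤ`-indexed complex of `R`-modules `⋯ → X (i+1) → X i → ⋯`. -/
structure ZComplex (R : Type u) [CommRing R] where
  X : ℤ → Type u
  [ab : ∀ i, AddCommGroup (X i)]
  [mod : ∀ i, Module R (X i)]
  d : ∀ i : ℤ, X (i + 1) →ₗ[R] X i

attribute [instance] ZComplex.ab ZComplex.mod

/-- The complex `c` is exact. -/
def ZComplex.Exact {R : Type u} [CommRing R] (c : ZComplex R) : Prop :=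
  ∀ i : ℤ, LinearMap.ker (c.d i) = LinearMap.range (c.d (i + 1))

/-- The complex `Hom_R(J, c)` is exact. -/
def ZComplex.HomFromExact {R : Type u} [CommRing R] (c : ZComplex R)
    (J : Type u) [AddCommGroup J] [Module R J] : Prop :=
  ∀ i : ℤ, LinearMap.ker (LinearMap.llcomp (σ₁₂ := RingHom.id R) (σ₁₃ := RingHom.id R) R J (c.X (i + 1)) (c.X i) (c.d i)) =
    LinearMap.range (LinearMap.llcomp (σ₁₂ := RingHom.id R) (σ₁₃ := RingHom.id R) R J (c.X (i + 1 + 1)) (c.X (i + 1)) (c.d (i + 1)))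

/-- The complex `Hom_R(c, Q)` is exact. -/
def ZComplex.HomToExact {R : Type u} [CommRing R] (c : ZComplex R)
    (Q : Type u) [AddCommGroup Q] [Module R Q] : Prop :=
  ∀ i : ℤ, LinearMap.ker (LinearMap.lcomp R Q (c.d (i + 1))) =
    LinearMap.range (LinearMap.lcomp R Q (c.d i))

/-- The complex `c ⊗_R J` is exact. -/
def ZComplex.TensorExact {R : Type u} [CommRing R] (c : ZComplex R)
    (J : Type u) [AddCommGroup J] [Module R J] : Prop :=
  ∀ i : ℤ, LinearMap.ker (LinearMap.rTensor J (c.d i)) =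
    LinearMap.range (LinearMap.rTensor J (c.d (i + 1)))

/-- `M` is `G_C`-injective: `M` is the cokernel of `∂_1` of a complete `I_C`-`I`-coresolution. -/
def IsGCInjective (R : Type u) [CommRing R] (C : Type u) [AddCommGroup C] [Module R C]
    (M : Type u) [AddCommGroup M] [Module R M] : Prop :=
  ∃ c : ZComplex R, c.Exact ∧
    (∀ (J : Type u) [AddCommGroup J] [Module R J], MemIC R C J → c.HomFromExact J) ∧
    (∀ i : ℤ, 0 ≤ i → MemIC R C (c.X i)) ∧
    (∀ i : ℤ, i < 0 → Module.Injective R (c.X i)) ∧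
    Nonempty (M ≃ₗ[R] (c.X 0 ⧸ LinearMap.range (c.d 0)))

/-- `M` is `G_C`-flat: `M` is the cokernel of `∂_1` of a complete `F`-`F_C`-resolution. -/
def IsGCFlat (R : Type u) [CommRing R] (C : Type u) [AddCommGroup C] [Module R C]
    (M : Type u) [AddCommGroup M] [Module R M] : Prop :=
  ∃ c : ZComplex R, c.Exact ∧
    (∀ (J : Type u) [AddCommGroup J] [Module R J], MemIC R C J → c.TensorExact J) ∧
    (∀ i : ℤ, 0 ≤ i → Module.Flat R (c.X i)) ∧
    (∀ i : ℤ, i < 0 → MemFC R C (c.X i)) ∧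
    Nonempty (M ≃ₗ[R] (c.X 0 ⧸ LinearMap.range (c.d 0)))

/-- `M` is `G_C`-projective: `M` is the cokernel of `∂_1` of a complete `P`-`P_C`-resolution. -/
def IsGCProjective (R : Type u) [CommRing R] (C : Type u) [AddCommGroup C] [Module R C]
    (M : Type u) [AddCommGroup M] [Module R M] : Prop :=
  ∃ c : ZComplex R, c.Exact ∧
    (∀ (Q : Type u) [AddCommGroup Q] [Module R Q], MemPC R C Q → c.HomToExact Q) ∧
    (∀ i : ℤ, 0 ≤ i → Module.Projective R (c.X i)) ∧
    (∀ i : ℤ, i < 0 → MemPC R C (c.X i)) ∧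
    Nonempty (M ≃ₗ[R] (c.X 0 ⧸ LinearMap.range (c.d 0)))

/-- `E` is an injective cogenerator: `E` is injective and `Hom_R(N, E) ≠ 0`
for every nonzero module `N`. -/
def IsInjectiveCogenerator (R : Type u) [CommRing R]
    (E : Type u) [AddCommGroup E] [Module R E] : Prop :=
  Module.Injective R E ∧
    ∀ (N : Type u) [AddCommGroup N] [Module R N], Nontrivial N → ∃ f : N →ₗ[R] E, f ≠ 0

/-- `M` belongs to the Auslander class `A_C(R)`. -/
def MemAuslanderClass (R : Type u) [CommRing R] (C : Type u) [AddCommGroup C] [Module R C]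
    (M : Type u) [AddCommGroup M] [Module R M] : Prop :=
  (∀ i : ℕ, 0 < i → torVanishes R i C M) ∧
    (∀ i : ℕ, 0 < i → extVanishes R i C (TensorProduct R C M)) ∧
    Function.Bijective ((TensorProduct.mk R C M).flip)

/-- `M` belongs to the Bass class `B_C(R)`. -/
def MemBassClass (R : Type u) [CommRing R] (C : Type u) [AddCommGroup C] [Module R C]
    (M : Type u) [AddCommGroup M] [Module R M] : Prop :=
  (∀ i : ℕ, 0 < i → extVanishes R i C M) ∧
    (∀ i : ℕ, 0 < i → torVanishes R i C (C →ₗ[R] M)) ∧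
    Function.Bijective (TensorProduct.lift (LinearMap.flip (LinearMap.id (R := R) (M := C →ₗ[R] M))))

/-- `φ : X → M` is an `I_C`-precover of `M`. -/
def IsICPrecover (R : Type u) [CommRing R] (C : Type u) [AddCommGroup C] [Module R C]
    {X M : Type u} [AddCommGroup X] [Module R X] [AddCommGroup M] [Module R M]
    (φ : X →ₗ[R] M) : Prop :=
  MemIC R C X ∧
    ∀ (Y : Type u) [AddCommGroup Y] [Module R Y], MemIC R C Y →
      ∀ g : Y →ₗ[R] M, ∃ h : Y →ₗ[R] X, φ ∘ₗ h = g

/-- `K` is an `n`-th syzygy of `M`: there is an exact sequence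
`0 → K → P_{n-1} → ⋯ → P_0 → M → 0` with all `P_j` projective. -/
def IsNthSyzygy (R : Type u) [CommRing R] (n : ℕ)
    (M : Type u) [AddCommGroup M] [Module R M]
    (K : Type u) [AddCommGroup K] [Module R K] : Prop :=
  ∃ (c : NChain R) (ε : c.X 0 →ₗ[R] M), c.IsResolutionOf ε ∧
    (∀ i, i < n → Module.Projective R (c.X i)) ∧
    (∀ i, n < i → Subsingleton (c.X i)) ∧ Nonempty (K ≃ₗ[R] c.X n)

/-- `K` is an `n`-th cosyzygy of `M`: there is an exact sequence
`0 → M → I^0 → ⋯ → I^{n-1} → K → 0` with all `I^j` injective. -/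
def IsNthCosyzygy (R : Type u) [CommRing R] (n : ℕ)
    (M : Type u) [AddCommGroup M] [Module R M]
    (K : Type u) [AddCommGroup K] [Module R K] : Prop :=
  ∃ (c : NCochain R) (ι : M →ₗ[R] c.X 0), c.IsCoresolutionOf ι ∧
    (∀ i, i < n → Module.Injective R (c.X i)) ∧
    (∀ i, n < i → Subsingleton (c.X i)) ∧ Nonempty (K ≃ₗ[R] c.X n)

/-- The depth of a module `M` over a local ring `R`:
`inf { n | Ext^n_R(k, M) ≠ 0 }`, where `k` is the residue field. -/
def depth (R : Type u) [CommRing R] [IsLocalRing R]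
    (M : Type u) [AddCommGroup M] [Module R M] : ℕ∞ :=
  sInf {n : ℕ∞ | ∃ m : ℕ, n = (m : ℕ∞) ∧ ¬ extVanishes R m (IsLocalRing.ResidueField R) M}

/-- `ι : C → E` exhibits `E` as an injective hull of `C`: `E` is injective and
the image of `ι` is an essential submodule of `E`. -/
def IsInjectiveHull (R : Type u) [CommRing R]
    {C E : Type u} [AddCommGroup C] [Module R C] [AddCommGroup E] [Module R E]
    (ι : C →ₗ[R] E) : Prop :=
  Module.Injective R E ∧ Function.Injective ι ∧
    ∀ N : Submodule R E, N ≠ ⊥ → N ⊓ LinearMap.range ι ≠ ⊥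

end Paper

open Paper

set_option maxHeartbeats 1000000

namespace SciAux

open CategoryTheory Opposite Limits

variable {R : Type u} [CommRing R]

def ExtVan (Kc : ChainComplex (ModuleCat.{u} R) ℕ) (Y : ModuleCat.{u} R) (n : ℕ) : Prop :=
  ∀ f : (Kc.X (n+1) ⟶ Y), Kc.d (n+2) (n+1) ≫ f = 0 → ∃ g : (Kc.X n ⟶ Y), Kc.d (n+1) n ≫ g = f

lemma exactAt_lyo_iff (Kc : ChainComplex (ModuleCat.{u} R) ℕ) (Y : ModuleCat.{u} R) (n : ℕ) :
    (Kc.linearYonedaObj R Y).ExactAt (n+1) ↔ ExtVan Kc Y n := by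
  rw [HomologicalComplex.exactAt_iff' _ n (n+1) (n+2) (by simp) (by simp)]
  rw [ShortComplex.moduleCat_exact_iff]
  constructor
  · intro h f hf
    obtain ⟨g, hg⟩ := h f (by
      show (ModuleCat.ofHom (Linear.leftComp R Y (Kc.d (n+2) (n+1)))) f = 0
      simpa using hf)
    exact ⟨g, hg⟩
  · intro h f hf
    obtain ⟨g, hg⟩ := h f (by exact hf)
    exact ⟨g, hg⟩

lemma subsingleton_iff_isZero (M : ModuleCat.{u} R) : Subsingleton M ↔ IsZero M := by
  constructor
  · intro h; exact ModuleCat.isZero_of_subsingleton M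
  · intro h
    have h0 : (𝟙 M) = (0 : M ⟶ M) := h.eq_of_src _ _
    refine ⟨fun a b => ?_⟩
    have ha : a = (0 : M ⟶ M) a := by rw [← h0]; rfl
    have hb : b = (0 : M ⟶ M) b := by rw [← h0]; rfl
    rw [ha, hb]; rfl

lemma extVanishes_iff' (A B : Type u) [AddCommGroup A] [Module R A] [AddCommGroup B] [Module R B]
    (P : ProjectiveResolution (ModuleCat.of R A)) (n : ℕ) :
    Subsingleton (((Ext R (ModuleCat.{u} R) (n+1)).obj (op (ModuleCat.of R A))).obj
        (ModuleCat.of R B)) ↔ ExtVan P.complex (ModuleCat.of R B) n := by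
  rw [subsingleton_iff_isZero, ← exactAt_lyo_iff P.complex (ModuleCat.of R B) n,
    HomologicalComplex.exactAt_iff_isZero_homology]
  exact ⟨fun h => h.of_iso (P.isoExt (n+1) (ModuleCat.of R B)).symm,
    fun h => h.of_iso (P.isoExt (n+1) (ModuleCat.of R B))⟩
variable {A : ModuleCat.{u} R} (P : ProjectiveResolution A)

def epsLM : P.complex.X 0 →ₗ[R] ((ChainComplex.single₀ (ModuleCat R)).obj A).X 0 := (P.π.f 0).hom

def syzK (P : ProjectiveResolution A) : Submodule R (P.complex.X 0) := LinearMap.ker (epsLM P)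

lemma d10_mem (x : P.complex.X 1) : (P.complex.d 1 0) x ∈ syzK P := by
  show (P.complex.d 1 0 ≫ P.π.f 0) x = 0
  rw [P.complex_d_comp_π_f_zero]
  rfl

def deltaLM : P.complex.X 1 →ₗ[R] (ModuleCat.of R (syzK P)) :=
  LinearMap.codRestrict (syzK P) (P.complex.d 1 0).hom (d10_mem P)

lemma delta_surj : Function.Surjective (deltaLM P) := by
  rintro ⟨x, hx⟩
  have hex := P.exact₀
  rw [ShortComplex.moduleCat_exact_iff] at hex
  obtain ⟨y, hy⟩ := hex x hx
  exact ⟨y, Subtype.ext hy⟩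

def truncCx (P : ProjectiveResolution A) : ChainComplex (ModuleCat.{u} R) ℕ :=
  ChainComplex.of (fun n => P.complex.X (n+1)) (fun n => P.complex.d (n+2) (n+1))
    (fun n => P.complex.d_comp_d _ _ _)

lemma truncCx_d (n : ℕ) : (truncCx P).d (n+1) n = P.complex.d (n+2) (n+1) :=
  ChainComplex.of_d (fun n => P.complex.X (n+1)) (fun n => P.complex.d (n+2) (n+1)) n

def truncPi : truncCx P ⟶ (ChainComplex.single₀ (ModuleCat R)).obj (ModuleCat.of R (syzK P)) :=
  (ChainComplex.toSingle₀Equiv _ _).symm ⟨ModuleCat.ofHom (deltaLM P), by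
    rw [show (truncCx P).d 1 0 = P.complex.d 2 1 from truncCx_d P 0]
    ext x
    show (P.complex.d 2 1 ≫ P.complex.d 1 0) x = 0
    rw [P.complex.d_comp_d]
    rfl⟩

lemma truncCx_exactAt_succ (n : ℕ) : (truncCx P).ExactAt (n+1) := by
  rw [HomologicalComplex.exactAt_iff' _ (n+2) (n+1) n (by simp) (by simp)]
  have h := P.exact_succ (n+1)
  rw [ShortComplex.moduleCat_exact_iff] at h ⊢
  intro x hx
  obtain ⟨y, hy⟩ := h x (by
    have e : (truncCx P).d (n+1) n = P.complex.d (n+2) (n+1) := truncCx_d P n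
    exact by simp [e] at hx ⊢; exact hx)
  refine ⟨y, ?_⟩
  have e2 : (truncCx P).d (n+2) (n+1) = P.complex.d (n+3) (n+2) := truncCx_d P (n+1)
  simp [e2] at hy ⊢; exact hy

instance truncCx_projective (n : ℕ) : Projective ((truncCx P).X n) := P.projective (n+1)

def truncRes (P : ProjectiveResolution A) :
    ProjectiveResolution (ModuleCat.of R (syzK P)) where
  complex := truncCx P
  π := truncPi P
  quasiIso := ⟨fun n => by
    cases n with
    | zero =>
      rw [ChainComplex.quasiIsoAt₀_iff, ShortComplex.quasiIso_iff_of_zeros']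
      · constructor
        · rw [ShortComplex.moduleCat_exact_iff]
          intro x hx
          have hx0 : (truncPi P).f 0 x = 0 := hx
          have heq : (truncPi P).f 0 = ModuleCat.ofHom (deltaLM P) :=
            ChainComplex.toSingle₀Equiv_symm_apply_f_zero _ _
          have hx' : (deltaLM P) x = 0 := by rw [heq] at hx0; exact hx0
          have h := P.exact_succ 0
          rw [ShortComplex.moduleCat_exact_iff] at h
          obtain ⟨y, hy⟩ := h x (congrArg Subtype.val hx')
          refine ⟨y, ?_⟩
          have e : (truncCx P).d 1 0 = P.complex.d 2 1 := truncCx_d P 0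
          simp [e] at hy ⊢; exact hy
        · have heq : (truncPi P).f 0 = ModuleCat.ofHom (deltaLM P) :=
            ChainComplex.toSingle₀Equiv_symm_apply_f_zero _ _
          have : Epi ((truncPi P).f 0) := by
            rw [heq]; exact (ModuleCat.epi_iff_surjective _).2 (delta_surj P)
          exact this
      all_goals rfl
    | succ n =>
      rw [quasiIsoAt_iff_exactAt']
      · exact truncCx_exactAt_succ P n
      · apply ChainComplex.exactAt_succ_single_obj⟩

lemma extVan_trunc_iff (B : ModuleCat.{u} R) (n : ℕ) :
    ExtVan (truncCx P) B n ↔ ExtVan P.complex B (n+1) := by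
  unfold ExtVan
  simp only [truncCx_d P]
  exact Iff.rfl

lemma syz_shift (A' B : Type u) [AddCommGroup A'] [Module R A'] [AddCommGroup B] [Module R B]
    (P : ProjectiveResolution (ModuleCat.of R A')) (n : ℕ) :
    Subsingleton (((Ext R (ModuleCat.{u} R) (n+2)).obj (op (ModuleCat.of R A'))).obj
        (ModuleCat.of R B)) ↔
    Subsingleton (((Ext R (ModuleCat.{u} R) (n+1)).obj (op (ModuleCat.of R (syzK P)))).obj
        (ModuleCat.of R B)) := by
  rw [extVanishes_iff' A' B P (n+1), extVanishes_iff' (syzK P) B (truncRes P) n]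
  exact (extVan_trunc_iff P (ModuleCat.of R B) n).symm


/-- Postcomposition map on the Hom complex. -/
def lyoMap (Kc : ChainComplex (ModuleCat.{u} R) ℕ) {Y Z : ModuleCat.{u} R} (φ : Y ⟶ Z) :
    Kc.linearYonedaObj R Y ⟶ Kc.linearYonedaObj R Z where
  f i := ModuleCat.ofHom (Linear.rightComp R (Kc.X i) φ)
  comm' i j _ := by
    ext (h : Kc.X i ⟶ Y)
    show (Kc.d j i ≫ h) ≫ φ = Kc.d j i ≫ (h ≫ φ)
    simp

variable {A : ModuleCat.{u} R} (P : ProjectiveResolution A)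

section Cosyz

variable (B : Type u) [AddCommGroup B] [Module R B]

def IM : ModuleCat.{u} R := Injective.under (ModuleCat.of R B)

instance : Injective (IM (R := R) B) := by unfold IM; infer_instance

def iotaLM : B →ₗ[R] (IM (R := R) B) := (Injective.ι (ModuleCat.of R B)).hom

lemma iota_inj : Function.Injective (iotaLM (R := R) B) := by
  have : Mono (Injective.ι (ModuleCat.of R B)) := inferInstance
  exact (ModuleCat.mono_iff_injective _).1 this

def QM : Type u := (IM (R := R) B) ⧸ LinearMap.range (iotaLM (R := R) B)

instance : AddCommGroup (QM (R := R) B) := by unfold QM; infer_instance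
instance : Module R (QM (R := R) B) := by unfold QM; infer_instance

def sesBIQ : ShortComplex (ModuleCat.{u} R) :=
  ShortComplex.mk (ModuleCat.ofHom (iotaLM (R := R) B))
    (ModuleCat.ofHom ((LinearMap.range (iotaLM (R := R) B)).mkQ))
    (by ext x; exact (Submodule.Quotient.mk_eq_zero _).2 ⟨x, rfl⟩)

lemma sesBIQ_shortExact : (sesBIQ (R := R) B).ShortExact := by
  refine { exact := ?_, mono_f := ?_, epi_g := ?_ }
  · rw [ShortComplex.moduleCat_exact_iff]
    intro x hx
    exact (Submodule.Quotient.mk_eq_zero _).1 hx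
  · exact (ModuleCat.mono_iff_injective _).2 (iota_inj B)
  · exact (ModuleCat.epi_iff_surjective _).2 (Submodule.mkQ_surjective _)

end Cosyz

section CosyzCx

variable (B : Type u) [AddCommGroup B] [Module R B]

def sesCx : ShortComplex (HomologicalComplex (ModuleCat.{u} R) (ComplexShape.up ℕ)) :=
  ShortComplex.mk
    (lyoMap P.complex ((sesBIQ (R := R) B).f))
    (lyoMap P.complex ((sesBIQ (R := R) B).g))
    (by
      ext i (h : P.complex.X i ⟶ _)
      show (h ≫ (sesBIQ (R := R) B).f) ≫ (sesBIQ (R := R) B).g = 0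
      rw [Category.assoc, (sesBIQ (R := R) B).zero, Limits.comp_zero])

lemma sesCx_shortExact : (sesCx P B).ShortExact := by
  apply HomologicalComplex.shortExact_of_degreewise_shortExact
  intro i
  refine { exact := ?_, mono_f := ?_, epi_g := ?_ }
  · rw [ShortComplex.moduleCat_exact_iff]
    have key : ∀ (f : P.complex.X i ⟶ IM (R := R) B), f ≫ (sesBIQ (R := R) B).g = 0 →
        ∃ g : P.complex.X i ⟶ ModuleCat.of R B, g ≫ (sesBIQ (R := R) B).f = f := by
      intro f hf
      have hf' : ∀ x, f x ∈ LinearMap.range (iotaLM (R := R) B) := by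
        intro x
        have h0 : (f ≫ (sesBIQ (R := R) B).g) x = 0 := by rw [hf]; rfl
        exact (Submodule.Quotient.mk_eq_zero _).1 h0
      set e := LinearEquiv.ofInjective (iotaLM (R := R) B) (iota_inj B)
      refine ⟨ModuleCat.ofHom (e.symm.toLinearMap ∘ₗ
        LinearMap.codRestrict _ f.hom hf'), ?_⟩
      ext x
      show iotaLM (R := R) B (e.symm ⟨f x, hf' x⟩) = f x
      have h1 : e (e.symm ⟨f x, hf' x⟩) = ⟨f x, hf' x⟩ := e.apply_symm_apply _
      have h2 : ((e (e.symm ⟨f x, hf' x⟩) : LinearMap.range (iotaLM (R := R) B)) : IM (R := R) B)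
          = f x := congrArg Subtype.val h1
      have h3 : ((e (e.symm ⟨f x, hf' x⟩) : LinearMap.range (iotaLM (R := R) B)) : IM (R := R) B)
          = iotaLM (R := R) B (e.symm ⟨f x, hf' x⟩) :=
        LinearEquiv.ofInjective_apply _ _
      rw [← h3]
      exact h2
    intro f hf
    exact key f hf
  · have : Mono ((lyoMap P.complex ((sesBIQ (R := R) B).f)).f i) := by
      rw [ModuleCat.mono_iff_injective]
      intro (f : P.complex.X i ⟶ _) (g : P.complex.X i ⟶ _) hfg
      have happ : ∀ x, iotaLM (R := R) B (f x) = iotaLM (R := R) B (g x) := fun x =>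
        congrArg (fun (h : P.complex.X i ⟶ IM (R := R) B) => h x) hfg
      exact ModuleCat.hom_ext (LinearMap.ext (fun x => iota_inj B (happ x)))
    exact this
  · have : Epi ((lyoMap P.complex ((sesBIQ (R := R) B).g)).f i) := by
      rw [ModuleCat.epi_iff_surjective]
      intro (h : P.complex.X i ⟶ ModuleCat.of R (QM (R := R) B))
      have : Epi ((sesBIQ (R := R) B).g) :=
        (ModuleCat.epi_iff_surjective _).2 (Submodule.mkQ_surjective _)
      refine ⟨@Projective.factorThru _ _ _ _ _ _ h ((sesBIQ (R := R) B).g) this, ?_⟩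
      show @Projective.factorThru _ _ _ _ _ _ h ((sesBIQ (R := R) B).g) this ≫ (sesBIQ (R := R) B).g = h
      exact @Projective.factorThru_comp _ _ _ _ _ _ h _ this
    exact this

end CosyzCx

lemma extVan_of_injective (I : ModuleCat.{u} R) [Injective I] (n : ℕ) :
    ExtVan P.complex I n := by
  haveI : Injective (ModuleCat.of R ↑I) := (by exact inferInstance : Injective I)
  intro f hf
  set dL : P.complex.X (n+1) →ₗ[R] P.complex.X n := (P.complex.d (n+1) n).hom with hdL
  have hker : LinearMap.ker dL ≤ LinearMap.ker f.hom := by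
    intro x hx
    have hex := P.exact_succ n
    rw [ShortComplex.moduleCat_exact_iff] at hex
    obtain ⟨y, hy⟩ := hex x hx
    show f x = 0
    rw [← hy]
    have h0 : (P.complex.d (n+2) (n+1) ≫ f) y = 0 := by rw [hf]; rfl
    exact h0
  set fbar : ↥(LinearMap.range dL) →ₗ[R] I :=
    ((LinearMap.ker dL).liftQ f.hom hker).comp
      (dL.quotKerEquivRange.symm.toLinearMap) with hfbar
  letI m : ModuleCat.of R ↥(LinearMap.range dL) ⟶ P.complex.X n :=
    ModuleCat.ofHom ((LinearMap.range dL).subtype)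
  haveI hm : Mono m := (ModuleCat.mono_iff_injective _).2 (Submodule.injective_subtype _)
  refine ⟨Injective.factorThru ((ModuleCat.ofHom fbar : ModuleCat.of R ↥(LinearMap.range dL) ⟶ I)) m, ?_⟩
  ext x
  have hmem : dL x ∈ LinearMap.range dL := ⟨x, rfl⟩
  have h2 := congrArg (fun (h : ModuleCat.of R ↥(LinearMap.range dL) ⟶ I) =>
    h ⟨dL x, hmem⟩) (Injective.comp_factorThru (ModuleCat.ofHom fbar) m)
  have h3 : dL.quotKerEquivRange.symm ⟨dL x, hmem⟩ = Submodule.Quotient.mk x := by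
    rw [LinearEquiv.symm_apply_eq]
    exact Subtype.ext (dL.quotKerEquivRange_apply_mk x).symm
  have h4 : fbar ⟨dL x, hmem⟩ = f x := by
    rw [hfbar]
    show ((LinearMap.ker dL).liftQ f.hom hker)
      (dL.quotKerEquivRange.symm ⟨dL x, hmem⟩) = f x
    rw [h3, Submodule.liftQ_apply]
  show (Injective.factorThru ((ModuleCat.ofHom fbar : ModuleCat.of R ↥(LinearMap.range dL) ⟶ I)) m) ((P.complex.d (n+1) n) x) = f x
  have h5 : (P.complex.d (n+1) n) x = m ⟨dL x, hmem⟩ := rfl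
  rw [h5]
  exact h2.trans h4

lemma subsingleton_of_forall_eq_zero {M : ModuleCat.{u} R} (h : ∀ x : M, x = 0) :
    Subsingleton M := ⟨fun a b => by rw [h a, h b]⟩

lemma ext_iff_homology (A' B : Type u) [AddCommGroup A'] [Module R A']
    [AddCommGroup B] [Module R B] (P : ProjectiveResolution (ModuleCat.of R A')) (n : ℕ) :
    Subsingleton (((Ext R (ModuleCat.{u} R) n).obj (op (ModuleCat.of R A'))).obj
        (ModuleCat.of R B)) ↔
      Subsingleton ((P.complex.linearYonedaObj R (ModuleCat.of R B)).homology n) := by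
  rw [subsingleton_iff_isZero, subsingleton_iff_isZero]
  exact ⟨fun h => h.of_iso (P.isoExt n (ModuleCat.of R B)).symm,
    fun h => h.of_iso (P.isoExt n (ModuleCat.of R B))⟩

section LES

variable (B : Type u) [AddCommGroup B] [Module R B]

lemma homologyI_subsingleton (m : ℕ) :
    Subsingleton ((sesCx P B).X₂.homology (m+1)) := by
  rw [subsingleton_iff_isZero, ← HomologicalComplex.exactAt_iff_isZero_homology]
  exact (exactAt_lyo_iff P.complex (IM (R := R) B) m).2
    (extVan_of_injective P (IM (R := R) B) m)

lemma cosyz_shift (n : ℕ) :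
    Subsingleton ((P.complex.linearYonedaObj R (ModuleCat.of R B)).homology (n+2)) ↔
    Subsingleton ((P.complex.linearYonedaObj R (ModuleCat.of R (QM (R := R) B))).homology
      (n+1)) := by
  have hS := sesCx_shortExact P B
  have hrel : (ComplexShape.up ℕ).Rel (n+1) (n+2) := by simp
  have hI1 := homologyI_subsingleton P B n
  have hI2 := homologyI_subsingleton P B (n+1)
  constructor
  · intro h1
    have hex := hS.homology_exact₃ (n+1) (n+2) hrel
    rw [ShortComplex.moduleCat_exact_iff] at hex
    refine subsingleton_of_forall_eq_zero ?_
    intro x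
    obtain ⟨y, hy⟩ := hex x (@Subsingleton.elim _ h1 _ 0)
    have hy0 : y = 0 := @Subsingleton.elim _ hI1 y 0
    rw [← hy, hy0, map_zero]
    rfl
  · intro h3
    have hex := hS.homology_exact₁ (n+1) (n+2) hrel
    rw [ShortComplex.moduleCat_exact_iff] at hex
    refine subsingleton_of_forall_eq_zero ?_
    intro x
    obtain ⟨y, hy⟩ := hex x (@Subsingleton.elim _ hI2 _ 0)
    have hy0 : y = 0 := @Subsingleton.elim _ h3 y 0
    rw [← hy, hy0, map_zero]
    rfl
end LES

section Packaged

variable (R)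

lemma syz_packaged (A' : Type u) [AddCommGroup A'] [Module R A'] :
    ∃ (K : Type u) (_ : AddCommGroup K) (_ : Module R K),
      ∀ (B : Type u) (_ : AddCommGroup B) (_ : Module R B) (n : ℕ),
        (Subsingleton (((Ext R (ModuleCat.{u} R) (n+2)).obj (op (ModuleCat.of R A'))).obj
            (ModuleCat.of R B)) ↔
          Subsingleton (((Ext R (ModuleCat.{u} R) (n+1)).obj (op (ModuleCat.of R K))).obj
            (ModuleCat.of R B))) := by
  let P := ProjectiveResolution.of (ModuleCat.of R A')
  exact ⟨↥(syzK P), inferInstance, inferInstance, fun B ib mb n => syz_shift A' B P n⟩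

lemma cosyz_packaged (B : Type u) [AddCommGroup B] [Module R B] :
    ∃ (B' : Type u) (_ : AddCommGroup B') (_ : Module R B'),
      ∀ (A' : Type u) (_ : AddCommGroup A') (_ : Module R A') (n : ℕ),
        (Subsingleton (((Ext R (ModuleCat.{u} R) (n+2)).obj (op (ModuleCat.of R A'))).obj
            (ModuleCat.of R B)) ↔
          Subsingleton (((Ext R (ModuleCat.{u} R) (n+1)).obj (op (ModuleCat.of R A'))).obj
            (ModuleCat.of R B'))) := by
  refine ⟨QM (R := R) B, inferInstance, inferInstance, fun A' ia ma n => ?_⟩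
  let P := ProjectiveResolution.of (ModuleCat.of R A')
  rw [ext_iff_homology A' B P (n+2), ext_iff_homology A' (QM (R := R) B) P (n+1)]
  exact cosyz_shift P B n

end Packaged


end SciAux


/-- `(⊥(M^C_sci), M^C_sci)` is a hereditary cotorsion theory: `M^C_sci = (⊥(M^C_sci))⊥`,
and `Ext^i(A, B) = 0` for all `i ≥ 1`, `A ∈ ⊥(M^C_sci)` and `B ∈ M^C_sci`. -/
theorem stmt_6 (R : Type u) [CommRing R] [IsNoetherianRing R]
    (C : Type u) [AddCommGroup C] [Module R C] (hC : IsSemidualizing R C) :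
    (∀ (M : Type u) [AddCommGroup M] [Module R M],
      StronglyCCopureInjective R C M ↔
        ∀ (A : Type u) [AddCommGroup A] [Module R A],
          (∀ (B : Type u) [AddCommGroup B] [Module R B],
            StronglyCCopureInjective R C B → extVanishes R 1 A B) →
          extVanishes R 1 A M) ∧
    (∀ (A : Type u) [AddCommGroup A] [Module R A],
      (∀ (B : Type u) [AddCommGroup B] [Module R B],
        StronglyCCopureInjective R C B → extVanishes R 1 A B) →
      ∀ (B : Type u) [AddCommGroup B] [Module R B], StronglyCCopureInjective R C B →
        ∀ i : ℕ, 0 < i → extVanishes R i A B) := by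
  classical
  constructor
  · intro M _ _
    constructor
    · intro hM A _ _ hA
      exact hA M hM
    · intro h
      have key : ∀ (j : ℕ) (X : Type u) (ix : AddCommGroup X) (mx : Module R X),
          (∀ (B : Type u) (ib : AddCommGroup B) (mb : Module R B),
            StronglyCCopureInjective R C B → ∀ k : ℕ, extVanishes R (k+1) X B) →
          extVanishes R (j+1) X M := by
        intro j
        induction j with
        | zero =>
          intro X ix mx hyp
          exact h X (fun B ib mb hB => hyp B ib mb hB 0)
        | succ n ih =>
          intro X ix mx hyp
          obtain ⟨K, ik, mk', hshift⟩ := SciAux.syz_packaged R X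
          have hypK : ∀ (B : Type u) (ib : AddCommGroup B) (mb : Module R B),
              StronglyCCopureInjective R C B → ∀ k : ℕ, extVanishes R (k+1) K B := by
            intro B ib mb hB k
            exact (hshift B ib mb k).1 (hyp B ib mb hB (k+1))
          have hK := ih K ik mk' hypK
          exact (hshift M inferInstance inferInstance n).2 hK
      intro X ix mx hX i hi
      obtain ⟨j, rfl⟩ : ∃ j, i = j + 1 := ⟨i - 1, (Nat.succ_pred_eq_of_pos hi).symm⟩
      exact key j X ix mx (fun B ib mb hB k => hB X hX (k+1) k.succ_pos)
  · intro A _ _ hA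
    have key : ∀ (i : ℕ) (B : Type u) (ib : AddCommGroup B) (mb : Module R B),
        StronglyCCopureInjective R C B → extVanishes R (i+1) A B := by
      intro i
      induction i with
      | zero => intro B ib mb hB; exact hA B hB
      | succ n ih =>
        intro B ib mb hB
        obtain ⟨B', ib', mb', hshift⟩ := SciAux.cosyz_packaged R B
        have hB' : StronglyCCopureInjective R C B' := by
          intro X ix mx hX m hm
          obtain ⟨m', rfl⟩ : ∃ m'', m = m'' + 1 := ⟨m - 1, (Nat.succ_pred_eq_of_pos hm).symm⟩
          exact (hshift X ix mx m').1 (hB X hX (m'+2) (by omega))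
        exact (hshift A inferInstance inferInstance n).2 (ih B' ib' mb' hB')
    intro B ib mb hB i hi
    obtain ⟨j, rfl⟩ : ∃ j, i = j + 1 := ⟨i - 1, (Nat.succ_pred_eq_of_pos hi).symm⟩
    exact key j B ib mb hB
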